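/- arXiv:1810.03130 — 2 statements merged into one kernel-verified Lean document; each statement's English description precedes it below -/
import Mathlib

section
/- For the Rodriguez parameterization, the norm of Υ_a(R) and the normalized Euclidean distance satisfy ‖Υ_a(R)‖² = 4‖ρ‖²/(1+‖ρ‖²)² = 4‖R‖_I(1 - ‖R‖_I), where R = R_ρ(ρ), Υ_a(R) = 2ρ/(1+‖ρ‖²), and ‖R‖_I = ‖ρ‖²/(1+‖ρ‖²). -/
/-! The skew part of `rod ρ` is traceless and `tr (ρ ρᵀ) = ‖ρ‖²`, so `‖R‖_I = s / (1 + s)` with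
`s = ‖ρ‖²`; then `4 t (1 - t) = 4 s / (1 + s)²` for `t = s / (1 + s)`. -/

open Matrix

noncomputable section

/-- The skew-symmetric matrix `[v]ₓ` of a vector `v ∈ ℝ³`. -/
def skew (v : Fin 3 → ℝ) : Matrix (Fin 3) (Fin 3) ℝ :=
  !![0, -v 2, v 1; v 2, 0, -v 0; -v 1, v 0, 0]

/-- The Rodriguez map `ρ ↦ (1/(1+‖ρ‖²)) ((1-‖ρ‖²) I₃ + 2ρρᵀ + 2[ρ]ₓ)`. -/
def rod (ρ : EuclideanSpace ℝ (Fin 3)) : Matrix (Fin 3) (Fin 3) ℝ :=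
  (1 / (1 + ‖ρ‖ ^ 2)) •
    ((1 - ‖ρ‖ ^ 2) • (1 : Matrix (Fin 3) (Fin 3) ℝ) +
      (2 : ℝ) • vecMulVec ρ ρ + (2 : ℝ) • skew ρ)


theorem norm_smul_two_div_sq {E : Type*} [NormedAddCommGroup E] [NormedSpace ℝ E] (x : E) :
    ‖(2 / (1 + ‖x‖ ^ 2)) • x‖ ^ 2 = 4 * ‖x‖ ^ 2 / (1 + ‖x‖ ^ 2) ^ 2 := by
  rw [norm_smul, Real.norm_of_nonneg (by positivity), mul_pow, div_pow]
  ring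

theorem trace_skew (v : Fin 3 → ℝ) : trace (skew v) = 0 := by
  simp [skew, trace, Fin.sum_univ_three]

theorem EuclideanSpace.dotProduct_self_eq_norm_sq {ι : Type*} [Fintype ι] (x : EuclideanSpace ℝ ι) :
    x.ofLp ⬝ᵥ x.ofLp = ‖x‖ ^ 2 := by
  rw [← real_inner_self_eq_norm_sq, EuclideanSpace.inner_eq_star_dotProduct]
  simp

theorem trace_rod (ρ : EuclideanSpace ℝ (Fin 3)) :
    trace (rod ρ) = (3 - ‖ρ‖ ^ 2) / (1 + ‖ρ‖ ^ 2) := by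
  simp only [rod, trace_smul, trace_add, trace_one, trace_vecMulVec, trace_skew,
    EuclideanSpace.dotProduct_self_eq_norm_sq, Fintype.card_fin, smul_eq_mul]
  field_simp
  ring

theorem quarter_trace_one_sub_rod (ρ : EuclideanSpace ℝ (Fin 3)) :
    (1 / 4 : ℝ) * trace (1 - rod ρ) = ‖ρ‖ ^ 2 / (1 + ‖ρ‖ ^ 2) := by
  rw [trace_sub, trace_one, trace_rod, Fintype.card_fin]
  field_simp
  ring

/-- For the Rodriguez parameterization, with `Υ_a(R) = 2ρ/(1+‖ρ‖²)` and
`‖R‖_I = (1/4) Tr(I₃ - R)`, one has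
`‖Υ_a(R)‖² = 4‖ρ‖²/(1+‖ρ‖²)² = 4‖R‖_I (1 - ‖R‖_I)`. -/
theorem norm_vex_sq (ρ : EuclideanSpace ℝ (Fin 3)) :
    ‖(2 / (1 + ‖ρ‖ ^ 2)) • ρ‖ ^ 2 = 4 * ‖ρ‖ ^ 2 / (1 + ‖ρ‖ ^ 2) ^ 2 ∧
    ‖(2 / (1 + ‖ρ‖ ^ 2)) • ρ‖ ^ 2 =
      4 * ((1 / 4 : ℝ) * Matrix.trace ((1 : Matrix (Fin 3) (Fin 3) ℝ) - rod ρ)) *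
        (1 - (1 / 4 : ℝ) * Matrix.trace ((1 : Matrix (Fin 3) (Fin 3) ℝ) - rod ρ)) := by
  refine ⟨norm_smul_two_div_sq ρ, ?_⟩
  rw [norm_smul_two_div_sq, quarter_trace_one_sub_rod]
  field_simp
  ring
end
end

section
/- Let V(ρ̃) = (‖ρ̃‖²/(1+‖ρ̃‖²))² and g̃ = (1/2)(I₃ + [ρ̃]ₓ + ρ̃ρ̃ᵀ). Then for any symmetric matrix Q², (1/2)Tr(g̃ᵀ V_ρ̃ρ̃ g̃ Q²) = (1/(2(1+‖ρ̃‖²)³))·Tr((1+‖ρ̃‖²)‖ρ̃‖² Q² + (2 - ‖ρ̃‖² - 3‖ρ̃‖⁴) ρ̃ρ̃ᵀ Q²). -/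
open Matrix

noncomputable section

/-- `V(ρ̃) = (‖ρ̃‖²/(1+‖ρ̃‖²))²`. -/
def Vfun (ρ : EuclideanSpace ℝ (Fin 3)) : ℝ := (‖ρ‖ ^ 2 / (1 + ‖ρ‖ ^ 2)) ^ 2

/-- The Hessian matrix `V_ρ̃ρ̃` of second partial derivatives of `V`. -/
def hessV (ρ : EuclideanSpace ℝ (Fin 3)) : Matrix (Fin 3) (Fin 3) ℝ :=
  fun i j => fderiv ℝ (fun x : EuclideanSpace ℝ (Fin 3) =>
    fderiv ℝ Vfun x (EuclideanSpace.single j 1)) ρ (EuclideanSpace.single i 1)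

/-!
`V` is the radial function `φ(‖ρ‖²)` with `φ t = (t/(1+t))²`, so its Hessian is
`2φ'(s) I + 4φ''(s) ρρᵀ` with `s = ‖ρ‖²`. Writing `G = I + [ρ]ₓ + ρρᵀ = 2g̃`, the relations
`[ρ]ₓρ = 0` and `[ρ]ₓ² = ρρᵀ - s I` give `GᵀG = (1+s)(I + ρρᵀ)` and `Gᵀρ = (1+s)ρ`, hence
`Gᵀ(aI + bρρᵀ)G = a(1+s)(I + ρρᵀ) + b(1+s)²ρρᵀ`; taking the trace against `Q` finishes.
-/

open scoped RealInnerProductSpace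

section Radial

variable {E : Type*} [NormedAddCommGroup E] [InnerProductSpace ℝ E]

theorem HasDerivAt.hasFDerivAt_comp_norm_sq {φ : ℝ → ℝ} {φ' : ℝ} {x : E}
    (hφ : HasDerivAt φ φ' (‖x‖ ^ 2)) :
    HasFDerivAt (fun y => φ (‖y‖ ^ 2)) ((2 * φ') • innerSL ℝ x) x := by
  refine (hφ.comp_hasFDerivAt x (hasStrictFDerivAt_norm_sq x).hasFDerivAt).congr_fderiv ?_
  ext y
  simp only [_root_.smul_apply, coe_innerSL_apply, nsmul_eq_mul, Nat.cast_ofNat,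
    smul_eq_mul]
  ring

theorem fderiv_fderiv_comp_norm_sq_apply {φ φ' : ℝ → ℝ} {φ'' : ℝ} {x : E}
    (hφ : ∀ t, 0 ≤ t → HasDerivAt φ (φ' t) t) (hφ' : HasDerivAt φ' φ'' (‖x‖ ^ 2)) (v w : E) :
    fderiv ℝ (fun y => fderiv ℝ (fun z => φ (‖z‖ ^ 2)) y v) x w =
      2 * φ' (‖x‖ ^ 2) * ⟪v, w⟫ + 4 * φ'' * ⟪x, v⟫ * ⟪x, w⟫ := by
  have hgrad : (fun y => fderiv ℝ (fun z => φ (‖z‖ ^ 2)) y v) =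
      fun y => 2 * φ' (‖y‖ ^ 2) * ⟪v, y⟫ := by
    funext y
    rw [((hφ _ (sq_nonneg _)).hasFDerivAt_comp_norm_sq).fderiv]
    simp [real_inner_comm]
  have hcoef := (hφ'.hasFDerivAt_comp_norm_sq (x := x)).const_mul 2
  have hinner : HasFDerivAt (fun y => ⟪v, y⟫) (innerSL ℝ v) x := (innerSL ℝ v).hasFDerivAt
  have hprod := hcoef.mul hinner
  simp only [Pi.mul_def] at hprod
  rw [hgrad, hprod.fderiv]
  simp only [real_inner_comm, _root_.add_apply, _root_.smul_apply,
    coe_innerSL_apply, smul_eq_mul]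
  ring

end Radial

theorem hasDerivAt_div_one_add_sq {t : ℝ} (ht : 1 + t ≠ 0) :
    HasDerivAt (fun t => (t / (1 + t)) ^ 2) (2 * t / (1 + t) ^ 3) t := by
  refine (((hasDerivAt_id' t).div ((hasDerivAt_id' t).const_add 1) ht).pow 2).congr_deriv ?_
  simp only [Pi.div_apply, Nat.cast_ofNat, Nat.add_one_sub_one, pow_one]
  field_simp
  ring

theorem hasDerivAt_mul_div_one_add_pow_three {t : ℝ} (ht : 1 + t ≠ 0) :
    HasDerivAt (fun t => 2 * t / (1 + t) ^ 3) (2 * (1 - 2 * t) / (1 + t) ^ 4) t := by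
  refine (((hasDerivAt_id' t).const_mul 2).div (((hasDerivAt_id' t).const_add 1).pow 3)
    (pow_ne_zero 3 ht)).congr_deriv ?_
  simp only [Pi.pow_apply]
  field_simp
  ring

theorem hessV_eq (ρ : EuclideanSpace ℝ (Fin 3)) :
    hessV ρ = (4 * ‖ρ‖ ^ 2 / (1 + ‖ρ‖ ^ 2) ^ 3) • (1 : Matrix (Fin 3) (Fin 3) ℝ) +
      (8 * (1 - 2 * ‖ρ‖ ^ 2) / (1 + ‖ρ‖ ^ 2) ^ 4) • vecMulVec ρ ρ := by
  have hne : ∀ t : ℝ, 0 ≤ t → 1 + t ≠ 0 := fun t ht => by positivity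
  ext i j
  simp only [hessV]
  unfold Vfun
  rw [fderiv_fderiv_comp_norm_sq_apply (fun t ht => hasDerivAt_div_one_add_sq (hne t ht))
    (hasDerivAt_mul_div_one_add_pow_three (hne _ (sq_nonneg ‖ρ‖)))]
  simp only [EuclideanSpace.inner_single_right, PiLp.single_apply,
    MonoidWithZeroHom.map_ite_one_zero, mul_ite, mul_one, mul_zero, Real.ringHom_apply, one_mul,
    Matrix.add_apply, Matrix.smul_apply, one_apply, smul_eq_mul, vecMulVec_apply]
  split_ifs <;> ring

theorem EuclideanSpace.real_norm_sq_eq_dotProduct {n : Type*} [Fintype n]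
    (x : EuclideanSpace ℝ n) : ‖x‖ ^ 2 = x ⬝ᵥ x := by
  rw [EuclideanSpace.real_norm_sq_eq]
  simp only [dotProduct, sq]

section Skew

variable (v : Fin 3 → ℝ)

theorem skew_mulVec (w : Fin 3 → ℝ) : skew v *ᵥ w = v ⨯₃ w := by
  ext i
  fin_cases i <;> simp [skew, cross_apply, vecHead, vecTail] <;> ring

theorem skew_mulVec_self : skew v *ᵥ v = 0 := by
  rw [skew_mulVec, cross_self]

theorem skew_transpose : (skew v)ᵀ = -skew v := by
  ext i j
  fin_cases i <;> fin_cases j <;> simp [skew]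

theorem skew_mul_skew : skew v * skew v = vecMulVec v v - (v ⬝ᵥ v) • 1 := by
  refine ext_iff_mulVec.2 fun w => ?_
  rw [← mulVec_mulVec, skew_mulVec, skew_mulVec, cross_cross_eq_smul_sub_smul', sub_mulVec,
    vecMulVec_mulVec, op_smul_eq_smul, smul_mulVec, one_mulVec]

theorem skew_mul_vecMulVec_self : skew v * vecMulVec v v = 0 := by
  rw [mul_vecMulVec, skew_mulVec_self, zero_vecMulVec]

theorem vecMulVec_self_mul_skew : vecMulVec v v * skew v = 0 := by
  rw [vecMulVec_mul, ← mulVec_transpose, skew_transpose, neg_mulVec, skew_mulVec_self, neg_zero,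
    vecMulVec_zero]

/-- Twice the matrix `g̃` of the statement. -/
def rodriguesMatrix : Matrix (Fin 3) (Fin 3) ℝ := 1 + skew v + vecMulVec v v

theorem rodriguesMatrix_transpose : (rodriguesMatrix v)ᵀ = 1 - skew v + vecMulVec v v := by
  rw [rodriguesMatrix, transpose_add, transpose_add, transpose_one, skew_transpose,
    transpose_vecMulVec, sub_eq_add_neg]

theorem rodriguesMatrix_transpose_mulVec_self :
    (rodriguesMatrix v)ᵀ *ᵥ v = (1 + v ⬝ᵥ v) • v := by
  rw [rodriguesMatrix_transpose, add_mulVec, sub_mulVec, one_mulVec, skew_mulVec_self,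
    vecMulVec_mulVec, op_smul_eq_smul, sub_zero, add_smul, one_smul]

theorem rodriguesMatrix_transpose_mul_self :
    (rodriguesMatrix v)ᵀ * rodriguesMatrix v = (1 + v ⬝ᵥ v) • (1 + vecMulVec v v) := by
  rw [rodriguesMatrix_transpose, rodriguesMatrix]
  simp only [add_mul, sub_mul, mul_add, one_mul, mul_one, skew_mul_skew, skew_mul_vecMulVec_self,
    vecMulVec_self_mul_skew, vecMulVec_mul_vecMulVec, vecMulVec_smul]
  module

theorem rodriguesMatrix_transpose_mul_vecMulVec_mul :
    (rodriguesMatrix v)ᵀ * vecMulVec v v * rodriguesMatrix v =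
      (1 + v ⬝ᵥ v) ^ 2 • vecMulVec v v := by
  rw [mul_vecMulVec, vecMulVec_mul, ← mulVec_transpose, rodriguesMatrix_transpose_mulVec_self,
    smul_vecMulVec, vecMulVec_smul, smul_smul, sq]

theorem rodriguesMatrix_transpose_mul_mul (a b : ℝ) :
    (rodriguesMatrix v)ᵀ * (a • 1 + b • vecMulVec v v) * rodriguesMatrix v =
      (a * (1 + v ⬝ᵥ v)) • (1 + vecMulVec v v) + (b * (1 + v ⬝ᵥ v) ^ 2) • vecMulVec v v := by
  simp only [Matrix.mul_add, Matrix.add_mul, Matrix.mul_smul, Matrix.smul_mul, Matrix.mul_one,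
    rodriguesMatrix_transpose_mul_self, rodriguesMatrix_transpose_mul_vecMulVec_mul, smul_smul]

end Skew

theorem trace_hessian_identity_general (ρ : EuclideanSpace ℝ (Fin 3))
    (Q : Matrix (Fin 3) (Fin 3) ℝ) :
    (1 / 2 : ℝ) *
      Matrix.trace
        (((1 / 2 : ℝ) • ((1 : Matrix (Fin 3) (Fin 3) ℝ) + skew ρ + vecMulVec ρ ρ))ᵀ *
          hessV ρ *
          ((1 / 2 : ℝ) • ((1 : Matrix (Fin 3) (Fin 3) ℝ) + skew ρ + vecMulVec ρ ρ)) * Q) =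
      (1 / (2 * (1 + ‖ρ‖ ^ 2) ^ 3)) *
        Matrix.trace (((1 + ‖ρ‖ ^ 2) * ‖ρ‖ ^ 2) • Q +
          (2 - ‖ρ‖ ^ 2 - 3 * ‖ρ‖ ^ 4) • (vecMulVec ρ ρ * Q)) := by
  change (1 / 2 : ℝ) * trace (((1 / 2 : ℝ) • rodriguesMatrix ρ)ᵀ * hessV ρ *
    ((1 / 2 : ℝ) • rodriguesMatrix ρ) * Q) = _
  have hhalf : ((1 / 2 : ℝ) • rodriguesMatrix ρ)ᵀ * hessV ρ * ((1 / 2 : ℝ) • rodriguesMatrix ρ) =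
      (1 / 4 : ℝ) • ((rodriguesMatrix ρ)ᵀ * hessV ρ * rodriguesMatrix ρ) := by
    simp only [transpose_smul, smul_mul, Matrix.mul_smul, smul_smul]
    norm_num
  rw [hhalf, hessV_eq, rodriguesMatrix_transpose_mul_mul,
    ← EuclideanSpace.real_norm_sq_eq_dotProduct]
  simp only [add_mul, smul_mul, one_mul, trace_add, trace_smul, smul_eq_mul]
  field_simp
  ring

/-- For `g̃ = (1/2)(I₃ + [ρ̃]ₓ + ρ̃ρ̃ᵀ)` and any symmetric `Q²`:
`(1/2)Tr(g̃ᵀ V_ρ̃ρ̃ g̃ Q²) =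
  (1/(2(1+‖ρ̃‖²)³)) Tr((1+‖ρ̃‖²)‖ρ̃‖² Q² + (2 - ‖ρ̃‖² - 3‖ρ̃‖⁴) ρ̃ρ̃ᵀ Q²)`. -/
theorem trace_hessian_identity (ρ : EuclideanSpace ℝ (Fin 3))
    (Q : Matrix (Fin 3) (Fin 3) ℝ) (hQ : Qᵀ = Q) :
    (1 / 2 : ℝ) *
      Matrix.trace
        (((1 / 2 : ℝ) • ((1 : Matrix (Fin 3) (Fin 3) ℝ) + skew ρ + vecMulVec ρ ρ))ᵀ *
          hessV ρ *
          ((1 / 2 : ℝ) • ((1 : Matrix (Fin 3) (Fin 3) ℝ) + skew ρ + vecMulVec ρ ρ)) * Q) =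
      (1 / (2 * (1 + ‖ρ‖ ^ 2) ^ 3)) *
        Matrix.trace (((1 + ‖ρ‖ ^ 2) * ‖ρ‖ ^ 2) • Q +
          (2 - ‖ρ‖ ^ 2 - 3 * ‖ρ‖ ^ 4) • (vecMulVec ρ ρ * Q)) :=
  trace_hessian_identity_general ρ Q
end
end
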